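/- arXiv:0907.0965 — 8 statements merged into one kernel-verified Lean document; each statement's English description precedes it below -/
import Mathlib

section
/- Let F be a field of characteristic zero, V a finite-dimensional F-vector space, A : V → V a linear operator with trace zero, v ∈ V and φ ∈ V*. Suppose that for every λ ∈ F the operator A + λ·(v ⊗ φ) is nilpotent. Then φ(Aⁱ v) = 0 for every i ≥ 0. -/
/-!
Taking `λ = 0` and `λ = 1`, both `A` and `A + B` are nilpotent, where `B = v ⊗ φ`. By strong
induction on `i`, assume `φ (Aᵏ v) = 0` for `k < i`. Since `B Aᵏ B = φ (Aᵏ v) • B`, every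
word in `(A + B)^(i+1)` with two or more letters `B` vanishes, so by cyclicity of the trace
`0 = tr (A + B)^(i+1) = tr A^(i+1) + (i + 1) φ (Aⁱ v) = (i + 1) φ (Aⁱ v)`,
and `φ (Aⁱ v) = 0` in characteristic zero.
-/

open Finset LinearMap

theorem add_pow_succ_of_mul_pow_mul_eq_zero {R : Type*} [Ring R] {a b : R} {n : ℕ}
    (h : ∀ k < n, b * a ^ k * b = 0) :
    (a + b) ^ (n + 1) = a ^ (n + 1) + ∑ j ∈ range (n + 1), a ^ j * b * a ^ (n - j) := by
  induction n with
  | zero => simp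
  | succ n ih =>
    have two_b : (∑ j ∈ range (n + 1), a ^ j * b * a ^ (n - j)) * b = 0 := by
      rw [sum_mul]
      refine sum_eq_zero fun j hj => ?_
      rw [mul_assoc (a ^ j * b), mul_assoc (a ^ j), ← mul_assoc b, h _ (by omega), mul_zero]
    have shift : (∑ j ∈ range (n + 1), a ^ j * b * a ^ (n - j)) * a =
        ∑ j ∈ range (n + 1), a ^ j * b * a ^ (n + 1 - j) := by
      rw [sum_mul]
      refine sum_congr rfl fun j hj => ?_
      rw [mul_assoc, ← pow_succ, Nat.sub_add_comm (by simpa [Nat.lt_succ_iff] using hj)]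
    rw [pow_succ, ih fun k hk => h k (by omega), add_mul, mul_add, mul_add, two_b, shift,
      sum_range_succ _ (n + 1), Nat.sub_self, pow_zero, mul_one, ← pow_succ]
    abel

theorem LinearMap.smulRight_mul_mul_smulRight {R M : Type*} [CommSemiring R] [AddCommMonoid M]
    [Module R M] (φ ψ : M →ₗ[R] R) (v w : M) (f : Module.End R M) :
    φ.smulRight v * f * ψ.smulRight w = φ (f w) • ψ.smulRight v := by
  ext x
  simp [smul_smul, mul_comm]

theorem LinearMap.mul_smulRight {R M : Type*} [CommSemiring R] [AddCommMonoid M] [Module R M]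
    (φ : M →ₗ[R] R) (v : M) (f : Module.End R M) :
    f * φ.smulRight v = φ.smulRight (f v) := by
  ext x
  simp

theorem LinearMap.trace_add_pow_succ_of_mul_pow_mul_eq_zero {R M : Type*} [CommRing R]
    [AddCommGroup M] [Module R M] {f g : Module.End R M} {n : ℕ}
    (h : ∀ k < n, g * f ^ k * g = 0) :
    trace R M ((f + g) ^ (n + 1)) =
      trace R M (f ^ (n + 1)) + (n + 1) • trace R M (f ^ n * g) := by
  have cyclic : ∀ j ∈ Finset.range (n + 1),
      trace R M (f ^ j * g * f ^ (n - j)) = trace R M (f ^ n * g) := by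
    intro j hj
    rw [trace_mul_comm, ← mul_assoc, ← pow_add,
      Nat.sub_add_cancel (by simpa [Nat.lt_succ_iff] using hj)]
  rw [add_pow_succ_of_mul_pow_mul_eq_zero h, map_add, map_sum, sum_congr rfl cyclic, sum_const,
    card_range]

theorem stmt_0_general (F V : Type*) [Field F] [CharZero F] [AddCommGroup V] [Module F V]
    [FiniteDimensional F V] (A : V →ₗ[F] V)
    (v : V) (φ : V →ₗ[F] F)
    (h : ∀ c : F, IsNilpotent (A + c • φ.smulRight v)) :
    ∀ i : ℕ, φ ((A ^ i) v) = 0 := by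
  have trace_pow_succ {f : V →ₗ[F] V} (hf : IsNilpotent f) (n : ℕ) :
      trace F V (f ^ (n + 1)) = 0 :=
    (isNilpotent_trace_of_isNilpotent (hf.pow_of_pos n.succ_ne_zero)).eq_zero
  have hA : IsNilpotent A := by simpa using h 0
  have hAB : IsNilpotent (A + φ.smulRight v) := by simpa using h 1
  intro i
  induction i using Nat.strong_induction_on with
  | _ i ih =>
  have hB : ∀ k < i, φ.smulRight v * A ^ k * φ.smulRight v = 0 := fun k hk => by
    rw [smulRight_mul_mul_smulRight, ih k hk, zero_smul]
  have key := trace_add_pow_succ_of_mul_pow_mul_eq_zero hB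
  rw [trace_pow_succ hAB, trace_pow_succ hA, zero_add, mul_smulRight, trace_smulRight] at key
  exact (smul_eq_zero.mp key.symm).resolve_left i.succ_ne_zero

theorem stmt_0 (F V : Type*) [Field F] [CharZero F] [AddCommGroup V] [Module F V]
    [FiniteDimensional F V] (A : V →ₗ[F] V) (hA : LinearMap.trace F V A = 0)
    (v : V) (φ : V →ₗ[F] F)
    (h : ∀ c : F, IsNilpotent (A + c • φ.smulRight v)) :
    ∀ i : ℕ, φ ((A ^ i) v) = 0 :=
  stmt_0_general F V A v φ h
end

section
/- Let M be a representation of sl₂ over a field of characteristic zero and let v ∈ M satisfy e·v = 0 and fⁿ·v = 0 for some n ≥ 1. Then (∏_{i=0}^{n-1}(h - i)) v = 0, the subspace U(h)·v spanned by {hʲ v : j ≥ 0} is finite-dimensional, and h acts semisimply on it with eigenvalues among {0, 1, …, n-1}. -/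
/-!
Commuting `e` past `f ^ (m + 1)` gives `e f^(m+1) = f^(m+1) e + (m+1) f^m (h - m)`. Hence if `v` is
killed by `e` and by `f ^ (n + 1)`, then `(h - n) v` is killed by `e` and by `f ^ n` (here
`char F = 0` is used), and induction on `n` gives `h (h - 1) ⋯ (h - n + 1) v = 0`. As the factors
have distinct eigenvalues, `v` is a sum of `h`-eigenvectors with eigenvalues in `{0, …, n - 1}`;
the span of these finitely many eigenvectors is `h`-stable and contains every `h ^ j v`.
-/

section CommutationRelation

variable {R A : Type*} [CommRing R] [Ring A] [Algebra R A]

theorem mul_pow_succ_eq_of_lie_eq {e f h : A} (hhf : ⁅h, f⁆ = -((2 : R) • f)) (hef : ⁅e, f⁆ = h)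
    (m : ℕ) :
    e * f ^ (m + 1) = f ^ (m + 1) * e + ((m + 1 : ℕ) : R) • (f ^ m * (h - (m : R) • 1)) := by
  rw [Ring.lie_def] at hhf hef
  have hf : h * f = f * h - (2 : R) • f := by rw [sub_eq_iff_eq_add.mp hhf]; abel
  have ef : e * f = f * e + h := by rw [← hef]; abel
  induction m with
  | zero => simpa using ef
  | succ m ih =>
    rw [pow_succ, ← mul_assoc, ih]
    simp only [add_mul, smul_mul_assoc, mul_assoc, sub_mul, one_mul, ef, hf]
    simp only [mul_add, mul_sub, mul_smul_comm, mul_one, ← mul_assoc, ← pow_succ]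
    match_scalars <;> ring

end CommutationRelation

namespace Module.End

open Submodule Set

section CommRing

variable {R M : Type*} [CommRing R] [AddCommGroup M] [Module R M]

def fallingProd (H : End R M) (n : ℕ) : End R M :=
  ((List.range n).map fun i : ℕ => H - (i : R) • 1).prod

theorem fallingProd_zero (H : End R M) : H.fallingProd 0 = 1 := rfl

theorem fallingProd_succ (H : End R M) (n : ℕ) :
    H.fallingProd (n + 1) = H.fallingProd n * (H - (n : R) • 1) := by
  simp [fallingProd, List.range_succ]

@[simp]
theorem sub_smul_one_apply (H : End R M) (c : R) (x : M) : (H - c • 1) x = H x - c • x := rfl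

theorem span_range_pow_apply_le {H : End R M} {p : Submodule R M} (hp : p ∈ H.invtSubmodule)
    {v : M} (hv : v ∈ p) : span R (range fun j : ℕ => (H ^ j) v) ≤ p := by
  rw [span_le]
  rintro _ ⟨j, rfl⟩
  induction j with
  | zero => simpa using hv
  | succ j ih =>
    simp only [pow_succ', mul_apply, SetLike.mem_coe] at ih ⊢
    exact hp ih

theorem biSup_eigenspace_mem_invtSubmodule {ι : Type*} (H : End R M) (s : Finset ι) (μ : ι → R) :
    (⨆ i ∈ s, H.eigenspace (μ i)) ∈ H.invtSubmodule := by
  rw [mem_invtSubmodule_iff_map_le, Submodule.map_iSup]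
  refine iSup_mono fun i => ?_
  rw [Submodule.map_iSup]
  exact iSup_mono fun _ => (mem_invtSubmodule_iff_map_le _).mp (H.eigenspace_mem_invtSubmodule _)

end CommRing

section Field

variable {F M : Type*} [Field F] [AddCommGroup M] [Module F M]

theorem eigenspace_le_map_sub_smul (H : End F M) {a c : F} (hac : a ≠ c) :
    H.eigenspace a ≤ (H.eigenspace a).map (H - c • 1) := by
  intro x hx
  refine ⟨(a - c)⁻¹ • x, smul_mem _ _ hx, ?_⟩
  rw [map_smul, sub_smul_one_apply, mem_eigenspace_iff.mp hx, ← sub_smul, smul_smul,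
    inv_mul_cancel₀ (sub_ne_zero.mpr hac), one_smul]

theorem finite_span_range_pow_apply {ι : Type*} {H : End F M} {s : Finset ι} {μ : ι → F} {v : M}
    (hv : v ∈ ⨆ i ∈ s, H.eigenspace (μ i)) :
    Module.Finite F (span F (range fun j : ℕ => (H ^ j) v)) := by
  obtain ⟨x, rfl⟩ := (mem_iSup_finset_iff_exists_sum _ v).mp hv
  set T := span F ((fun i => (x i : M)) '' s)
  have hT : T ∈ H.invtSubmodule := by
    rw [mem_invtSubmodule, span_le]
    rintro _ ⟨i, hi, rfl⟩
    rw [SetLike.mem_coe, mem_comap, mem_eigenspace_iff.mp (x i).2]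
    exact smul_mem _ _ (subset_span ⟨i, hi, rfl⟩)
  have : Module.Finite F T := Module.Finite.span_of_finite F (s.finite_toSet.image _)
  exact Submodule.finiteDimensional_of_le
    (span_range_pow_apply_le hT (sum_mem fun i hi => subset_span ⟨i, hi, rfl⟩))

variable [CharZero F]

theorem fallingProd_apply_eq_zero_of_pow_apply_eq_zero {e f h : End F M}
    (hhe : ⁅h, e⁆ = (2 : F) • e) (hhf : ⁅h, f⁆ = -((2 : F) • f)) (hef : ⁅e, f⁆ = h)
    {v : M} (hv : e v = 0) {n : ℕ} (hfn : (f ^ n) v = 0) : h.fallingProd n v = 0 := by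
  induction n generalizing v with
  | zero => simpa [fallingProd_zero] using hfn
  | succ n ih =>
    rw [fallingProd_succ, mul_apply]
    apply ih
    · have heh : e (h v) = 0 := by simpa [Ring.lie_def, hv] using congr($hhe v)
      simp [heh, hv]
    · have key := congr($(mul_pow_succ_eq_of_lie_eq hhf hef n) v)
      simp only [mul_apply, LinearMap.add_apply, LinearMap.smul_apply, hv, hfn, map_zero,
        zero_add] at key
      exact (smul_eq_zero.mp key.symm).resolve_left (Nat.cast_ne_zero.mpr n.succ_ne_zero)

theorem mem_iSup_eigenspace_of_fallingProd_apply_eq_zero {H : End F M} {n : ℕ} {v : M}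
    (hv : H.fallingProd n v = 0) : v ∈ ⨆ i ∈ Finset.range n, H.eigenspace (i : F) := by
  induction n generalizing v with
  | zero => simp_all [fallingProd_zero]
  | succ n ih =>
    set W := ⨆ i ∈ Finset.range n, H.eigenspace (i : F)
    rw [fallingProd_succ, mul_apply] at hv
    have hW : W ≤ W.map (H - (n : F) • 1) := by
      refine iSup₂_le fun i hi => ?_
      have hin : (i : F) ≠ n := by exact_mod_cast (Finset.mem_range.mp hi).ne
      exact (H.eigenspace_le_map_sub_smul hin).trans (map_mono (le_iSup₂_of_le i hi le_rfl))
    obtain ⟨u, hu, hu_eq⟩ := hW (ih hv)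
    have hvu : v - u ∈ H.eigenspace (n : F) := by
      rw [eigenspace_def, LinearMap.mem_ker, map_sub, hu_eq, sub_self]
    have hWle : W ≤ ⨆ i ∈ Finset.range (n + 1), H.eigenspace (i : F) :=
      biSup_mono fun _ => by simp only [Finset.mem_range]; omega
    have hEn : H.eigenspace (n : F) ≤ ⨆ i ∈ Finset.range (n + 1), H.eigenspace (i : F) :=
      le_iSup₂_of_le n (Finset.self_mem_range_succ n) le_rfl
    rw [← sub_add_cancel v u]
    exact add_mem (hEn hvu) (hWle hu)

end Field

end Module.End

theorem stmt_3_general (F M : Type*) [Field F] [CharZero F] [AddCommGroup M] [Module F M]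
    (E Fo H : Module.End F M)
    (hHE : ⁅H, E⁆ = (2 : F) • E) (hHF : ⁅H, Fo⁆ = -((2 : F) • Fo)) (hEF : ⁅E, Fo⁆ = H)
    (v : M) (hv : E v = 0) (n : ℕ) (hfn : (Fo ^ n) v = 0) :
    (((List.range n).map fun i : ℕ => H - (i : F) • 1).prod) v = 0 ∧
    Module.Finite F ↥(Submodule.span F (Set.range fun j : ℕ => (H ^ j) v)) ∧
    Submodule.span F (Set.range fun j : ℕ => (H ^ j) v) ≤
      ⨆ i ∈ Finset.range n, Module.End.eigenspace H (i : F) := by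
  have hprod : H.fallingProd n v = 0 :=
    Module.End.fallingProd_apply_eq_zero_of_pow_apply_eq_zero hHE hHF hEF hv hfn
  have hmem := Module.End.mem_iSup_eigenspace_of_fallingProd_apply_eq_zero hprod
  exact ⟨hprod, Module.End.finite_span_range_pow_apply hmem,
    Module.End.span_range_pow_apply_le (H.biSup_eigenspace_mem_invtSubmodule _ _) hmem⟩

theorem stmt_3 (F M : Type*) [Field F] [CharZero F] [AddCommGroup M] [Module F M]
    (E Fo H : Module.End F M)
    (hHE : ⁅H, E⁆ = (2 : F) • E) (hHF : ⁅H, Fo⁆ = -((2 : F) • Fo)) (hEF : ⁅E, Fo⁆ = H)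
    (v : M) (hv : E v = 0) (n : ℕ) (hn : 1 ≤ n) (hfn : (Fo ^ n) v = 0) :
    (((List.range n).map fun i : ℕ => H - (i : F) • 1).prod) v = 0 ∧
    Module.Finite F ↥(Submodule.span F (Set.range fun j : ℕ => (H ^ j) v)) ∧
    Submodule.span F (Set.range fun j : ℕ => (H ^ j) v) ≤
      ⨆ i ∈ Finset.range n, Module.End.eigenspace H (i : F) :=
  stmt_3_general F M E Fo H hHE hHF hEF v hv n hfn
end

section
/- Let M be a representation of sl₂ over a field of characteristic zero and let v ∈ M. Suppose eᵏ·v = 0 and fⁿ·v = 0 for some positive integers k, n. Then the sl₂-subrepresentation of M generated by v is finite-dimensional. -/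
/-!
Induction on `k`. If `e v = 0`, the identity `eᵐ fᵐ v = m! • h(h-1)⋯(h-m+1) v` together with
`fⁿ v = 0` shows that `u_c = h(h-1)⋯(h-c+1) v` vanishes for `c = n`; the `u_c` with `c ≤ n`
therefore span a finite-dimensional `h`-stable subspace `Z` killed by `e` and `fⁿ`, and
`Z + f Z + ⋯ + fⁿ Z` is `sl₂`-stable. In general `e v` satisfies `eᵏ⁻¹ (e v) = 0` and
`fⁿ⁺¹ (e v) = 0`, so by induction it lies in a finite-dimensional invariant `W₁`; in `M ⧸ W₁`
the image of `v` is killed by `e`, and the preimage of the subspace obtained there is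
finite-dimensional and invariant. The subrepresentation generated by `v` is the intersection of
all invariant subspaces containing `v`, so it is contained in this one.
-/

open Polynomial Submodule

structure IsSl2Action {R M : Type*} [CommRing R] [AddCommGroup M] [Module R M]
    (e f h : Module.End R M) : Prop where
  lie_h_e : ⁅h, e⁆ = (2 : R) • e
  lie_h_f : ⁅h, f⁆ = -((2 : R) • f)
  lie_e_f : ⁅e, f⁆ = h

structure IsSl2Invariant {R M : Type*} [CommRing R] [AddCommGroup M] [Module R M]
    (e f h : Module.End R M) (W : Submodule R M) : Prop where
  le_comap_e : W ≤ W.comap e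
  le_comap_f : W ≤ W.comap f
  le_comap_h : W ≤ W.comap h

theorem Submodule.sInf_le_comap_sInf {R M : Type*} [Semiring R] [AddCommMonoid M] [Module R M]
    {S : Set (Submodule R M)} {a : Module.End R M} (hS : ∀ W ∈ S, W ≤ W.comap a) :
    sInf S ≤ (sInf S).comap a :=
  fun _ hx => mem_sInf.2 fun W hW => hS W hW (mem_sInf.1 hx W hW)

theorem Submodule.finite_comap_mkQ {R M : Type*} [Ring R] [AddCommGroup M] [Module R M]
    {W₁ : Submodule R M} {W₂ : Submodule R (M ⧸ W₁)} [Module.Finite R W₁] [Module.Finite R W₂] :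
    Module.Finite R (W₂.comap W₁.mkQ) := by
  rw [Module.Finite.iff_fg] at *
  refine fg_of_fg_map_of_fg_inf_ker W₁.mkQ ?_ ?_
  · rwa [map_comap_eq_of_surjective W₁.mkQ_surjective]
  · rwa [inf_eq_right.2 (LinearMap.ker_le_comap _), ker_mkQ]

namespace Sl2

variable {R M : Type*} [CommRing R] [AddCommGroup M] [Module R M] {e f h : Module.End R M}

theorem e_mul_h (hhe : ⁅h, e⁆ = (2 : R) • e) : e * h = h * e - (2 : R) • e := by
  rw [← hhe, Ring.lie_def]; abel

theorem f_mul_h (hhf : ⁅h, f⁆ = -((2 : R) • f)) : f * h = h * f + (2 : R) • f := by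
  rw [← neg_neg ((2 : R) • f), ← hhf, Ring.lie_def]; abel

theorem e_mul_f (hef : ⁅e, f⁆ = h) : e * f = f * e + h := by
  rw [← hef, Ring.lie_def]; abel

theorem f_pow_mul_h (hhf : ⁅h, f⁆ = -((2 : R) • f)) (b : ℕ) :
    f ^ b * h = h * f ^ b + (2 * b : R) • f ^ b := by
  induction b with
  | zero => simp
  | succ b ih =>
    rw [pow_succ, mul_assoc, f_mul_h hhf, mul_add, ← mul_assoc, ih]
    simp only [add_mul, smul_mul_assoc, mul_smul_comm, mul_assoc, ← pow_succ]
    push_cast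
    module

theorem h_mul_f_pow (hhf : ⁅h, f⁆ = -((2 : R) • f)) (b : ℕ) :
    h * f ^ b = f ^ b * h - (2 * b : R) • f ^ b := by
  rw [f_pow_mul_h hhf]; abel

theorem e_mul_f_pow_succ (hhf : ⁅h, f⁆ = -((2 : R) • f)) (hef : ⁅e, f⁆ = h) (b : ℕ) :
    e * f ^ (b + 1) = f ^ (b + 1) * e + (b + 1 : R) • (f ^ b * h - (b : R) • f ^ b) := by
  induction b with
  | zero => simp [e_mul_f hef]
  | succ b ih =>
    have hfh : f ^ b * h * f = f ^ (b + 1) * h - (2 : R) • f ^ (b + 1) := by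
      rw [mul_assoc, ← sub_eq_iff_eq_add.mpr (f_mul_h hhf), pow_succ, mul_sub, mul_assoc,
        mul_smul_comm]
    rw [pow_succ, ← mul_assoc, ih, add_mul, mul_assoc, e_mul_f hef, smul_mul_assoc, sub_mul, hfh,
      smul_mul_assoc, mul_add, ← mul_assoc, ← pow_succ, ← pow_succ]
    push_cast
    module

theorem e_f_pow_succ_apply_of_e_eq_zero (hhf : ⁅h, f⁆ = -((2 : R) • f)) (hef : ⁅e, f⁆ = h) {x : M}
    (hx : e x = 0) (b : ℕ) : e ((f ^ (b + 1)) x) = (b + 1 : R) • (f ^ b) (h x - (b : R) • x) := by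
  simpa [hx] using congr($(e_mul_f_pow_succ hhf hef b) x)

theorem e_h_apply_eq_zero (hhe : ⁅h, e⁆ = (2 : R) • e) {x : M} (hx : e x = 0) : e (h x) = 0 := by
  simpa [hx] using congr($(e_mul_h hhe) x)

theorem f_pow_h_apply_eq_zero (hhf : ⁅h, f⁆ = -((2 : R) • f)) {n : ℕ} {x : M}
    (hx : (f ^ n) x = 0) : (f ^ n) (h x) = 0 := by
  simpa [hx] using congr($(f_pow_mul_h hhf n) x)

theorem aeval_descPochhammer_succ_apply (c : ℕ) (x : M) :
    aeval h (descPochhammer R (c + 1)) x = aeval h (descPochhammer R c) (h x - (c : R) • x) := by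
  simp [descPochhammer_succ_right, Nat.cast_smul_eq_nsmul]

theorem aeval_descPochhammer_succ_apply_eq_sub (c : ℕ) (x : M) :
    aeval h (descPochhammer R (c + 1)) x =
      h (aeval h (descPochhammer R c) x) - (c : R) • aeval h (descPochhammer R c) x := by
  rw [descPochhammer_succ_right, mul_comm]
  simp [Nat.cast_smul_eq_nsmul]

theorem aeval_descPochhammer_apply_mem {P : Submodule R M} (hP : P ≤ P.comap h) {x : M}
    (hx : x ∈ P) (c : ℕ) : aeval h (descPochhammer R c) x ∈ P := by
  induction c with
  | zero => simpa
  | succ c ih =>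
    rw [aeval_descPochhammer_succ_apply_eq_sub]
    exact sub_mem (hP ih) (smul_mem _ _ ih)

def powMapSup (f : Module.End R M) (n : ℕ) (Z : Submodule R M) : Submodule R M :=
  (Finset.range (n + 1)).sup fun b => Z.map (f ^ b)

theorem pow_apply_mem_powMapSup {n b : ℕ} (hb : b ≤ n) {Z : Submodule R M} {z : M} (hz : z ∈ Z) :
    (f ^ b) z ∈ powMapSup f n Z :=
  SetLike.le_def.1 (Finset.le_sup (f := fun b => Z.map (f ^ b)) (Finset.mem_range_succ_iff.2 hb))
    (mem_map_of_mem hz)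

theorem powMapSup_le_comap_iff {n : ℕ} {Z W : Submodule R M} {a : Module.End R M} :
    powMapSup f n Z ≤ W.comap a ↔ ∀ b ≤ n, ∀ z ∈ Z, a ((f ^ b) z) ∈ W := by
  simp only [powMapSup, Finset.sup_le_iff, Finset.mem_range_succ_iff, map_le_iff_le_comap]
  rfl

theorem isSl2Invariant_powMapSup (hhf : ⁅h, f⁆ = -((2 : R) • f)) (hef : ⁅e, f⁆ = h) {n : ℕ}
    {Z : Submodule R M} (hZh : Z ≤ Z.comap h) (hZe : Z ≤ LinearMap.ker e)
    (hZf : Z ≤ LinearMap.ker (f ^ n)) : IsSl2Invariant e f h (powMapSup f n Z) where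
  le_comap_e := powMapSup_le_comap_iff.2 fun b hb z hz => by
    cases b with
    | zero => simp [LinearMap.mem_ker.1 (hZe hz)]
    | succ b =>
      rw [e_f_pow_succ_apply_of_e_eq_zero hhf hef (hZe hz)]
      exact smul_mem _ _ (pow_apply_mem_powMapSup (by omega) (sub_mem (hZh hz) (smul_mem _ _ hz)))
  le_comap_f := powMapSup_le_comap_iff.2 fun b hb z hz => by
    rw [← Module.End.mul_apply, ← pow_succ']
    rcases hb.lt_or_eq with hb | rfl
    · exact pow_apply_mem_powMapSup hb hz
    · rw [pow_succ', Module.End.mul_apply, hZf hz, map_zero]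
      exact zero_mem _
  le_comap_h := powMapSup_le_comap_iff.2 fun b hb z hz => by
    have : h ((f ^ b) z) = (f ^ b) (h z - (2 * b : R) • z) := by
      simpa using congr($(h_mul_f_pow hhf b) z)
    rw [this]
    exact pow_apply_mem_powMapSup hb (sub_mem (hZh hz) (smul_mem _ _ hz))

end Sl2

namespace IsSl2Invariant

variable {R M : Type*} [CommRing R] [AddCommGroup M] [Module R M] {e f h : Module.End R M}

theorem bot : IsSl2Invariant e f h ⊥ := ⟨bot_le, bot_le, bot_le⟩

theorem comap_mkQ {W₁ : Submodule R M} (hW₁ : IsSl2Invariant e f h W₁)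
    {W₂ : Submodule R (M ⧸ W₁)} (hW₂ : IsSl2Invariant (W₁.mapQ W₁ e hW₁.le_comap_e)
      (W₁.mapQ W₁ f hW₁.le_comap_f) (W₁.mapQ W₁ h hW₁.le_comap_h) W₂) :
    IsSl2Invariant e f h (W₂.comap W₁.mkQ) where
  le_comap_e _ hx := hW₂.le_comap_e hx
  le_comap_f _ hx := hW₂.le_comap_f hx
  le_comap_h _ hx := hW₂.le_comap_h hx

theorem sInf {S : Set (Submodule R M)} (hS : ∀ W ∈ S, IsSl2Invariant e f h W) :
    IsSl2Invariant e f h (sInf S) where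
  le_comap_e := sInf_le_comap_sInf fun W hW => (hS W hW).le_comap_e
  le_comap_f := sInf_le_comap_sInf fun W hW => (hS W hW).le_comap_f
  le_comap_h := sInf_le_comap_sInf fun W hW => (hS W hW).le_comap_h

end IsSl2Invariant

namespace IsSl2Action

open Sl2

section CommRing

variable {R M : Type*} [CommRing R] [AddCommGroup M] [Module R M] {e f h : Module.End R M}

theorem e_pow_f_pow_apply (hs : IsSl2Action e f h) {v : M} (hv : e v = 0) (m : ℕ) :
    (e ^ m) ((f ^ m) v) = (m.factorial : R) • aeval h (descPochhammer R m) v := by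
  induction m generalizing v with
  | zero => simp
  | succ m ih =>
    have hw : e (h v - (m : R) • v) = 0 := by simp [e_h_apply_eq_zero hs.lie_h_e hv, hv]
    rw [pow_succ, Module.End.mul_apply,
      e_f_pow_succ_apply_of_e_eq_zero hs.lie_h_f hs.lie_e_f hv, map_smul, ih hw,
      aeval_descPochhammer_succ_apply, smul_smul, Nat.factorial_succ]
    push_cast
    ring_nf

theorem mapQ {W : Submodule R M} (hs : IsSl2Action e f h) (hW : IsSl2Invariant e f h W) :
    IsSl2Action (W.mapQ W e hW.le_comap_e) (W.mapQ W f hW.le_comap_f)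
      (W.mapQ W h hW.le_comap_h) where
  lie_h_e := by
    ext x
    simpa [Ring.lie_def] using congr(W.mkQ ($hs.lie_h_e x))
  lie_h_f := by
    ext x
    simpa [Ring.lie_def] using congr(W.mkQ ($hs.lie_h_f x))
  lie_e_f := by
    ext x
    simpa [Ring.lie_def] using congr(W.mkQ ($hs.lie_e_f x))

end CommRing

section Field

variable {K M : Type*} [Field K] [CharZero K] [AddCommGroup M] [Module K M]
  {e f h : Module.End K M}

theorem aeval_descPochhammer_apply_eq_zero (hs : IsSl2Action e f h) {v : M} {n : ℕ}
    (he : e v = 0) (hf : (f ^ n) v = 0) : aeval h (descPochhammer K n) v = 0 := by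
  have := hs.e_pow_f_pow_apply he n
  rw [hf, map_zero, eq_comm, smul_eq_zero] at this
  exact this.resolve_left (by exact_mod_cast n.factorial_ne_zero)

theorem exists_finite_isSl2Invariant_of_e_eq_zero (hs : IsSl2Action e f h) {v : M} {n : ℕ}
    (he : e v = 0) (hf : (f ^ n) v = 0) :
    ∃ W : Submodule K M, v ∈ W ∧ IsSl2Invariant e f h W ∧ Module.Finite K W := by
  set u : ℕ → M := fun c => aeval h (descPochhammer K c) v
  set Z := span K (u '' Set.Iic n)
  have hvZ : v ∈ Z := subset_span ⟨0, by simp, by simp [u]⟩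
  have hZh : Z ≤ Z.comap h := span_le.2 <| by
    rintro _ ⟨c, hc, rfl⟩
    have hu : h (u c) = u (c + 1) + (c : K) • u c := by
      simp [u, aeval_descPochhammer_succ_apply_eq_sub]
    rw [SetLike.mem_coe, mem_comap, hu]
    refine add_mem ?_ (smul_mem _ _ (subset_span ⟨c, hc, rfl⟩))
    rcases (Set.mem_Iic.1 hc).lt_or_eq with hc | rfl
    · exact subset_span ⟨c + 1, Nat.succ_le_of_lt hc, rfl⟩
    · simp [u, aeval_descPochhammer_succ_apply_eq_sub, hs.aeval_descPochhammer_apply_eq_zero he hf]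
  have hZker : Z ≤ LinearMap.ker e ⊓ LinearMap.ker (f ^ n) := span_le.2 <| by
    rintro _ ⟨c, -, rfl⟩
    refine aeval_descPochhammer_apply_mem (fun x hx => ?_) (mem_inf.2 ⟨he, hf⟩) c
    obtain ⟨hex, hfx⟩ := mem_inf.1 hx
    exact mem_inf.2 ⟨e_h_apply_eq_zero hs.lie_h_e hex, f_pow_h_apply_eq_zero hs.lie_h_f hfx⟩
  have : Module.Finite K Z := Module.Finite.span_of_finite K ((Set.finite_Iic n).image u)
  refine ⟨powMapSup f n Z, by simpa using pow_apply_mem_powMapSup (f := f) (Nat.zero_le n) hvZ,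
    isSl2Invariant_powMapSup hs.lie_h_f hs.lie_e_f hZh (hZker.trans inf_le_left)
      (hZker.trans inf_le_right), ?_⟩
  unfold powMapSup
  infer_instance

theorem exists_finite_isSl2Invariant (hs : IsSl2Action e f h) {v : M} {k n : ℕ}
    (he : (e ^ k) v = 0) (hf : (f ^ n) v = 0) :
    ∃ W : Submodule K M, v ∈ W ∧ IsSl2Invariant e f h W ∧ Module.Finite K W := by
  induction k generalizing M v n with
  | zero => exact ⟨⊥, by simpa using he, .bot, inferInstance⟩
  | succ k ih =>
    have hfe : (f ^ (n + 1)) (e v) = 0 := by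
      simpa [hf, f_pow_h_apply_eq_zero hs.lie_h_f hf, pow_succ'] using
        congr($(e_mul_f_pow_succ hs.lie_h_f hs.lie_e_f n) v).symm
    obtain ⟨W₁, heW₁, hW₁, _⟩ := ih hs (by rwa [← Module.End.mul_apply, ← pow_succ]) hfe
    obtain ⟨W₂, hvW₂, hW₂, _⟩ := (hs.mapQ hW₁).exists_finite_isSl2Invariant_of_e_eq_zero
      (v := W₁.mkQ v) (n := n) (by simpa using heW₁)
      (by rw [← mapQ_pow, mkQ_apply, mapQ_apply, hf, Quotient.mk_zero])
    exact ⟨W₂.comap W₁.mkQ, hvW₂, hW₁.comap_mkQ hW₂, finite_comap_mkQ⟩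

end Field

end IsSl2Action

theorem stmt_4_general (F M : Type*) [Field F] [CharZero F] [AddCommGroup M] [Module F M]
    (E Fo H : Module.End F M)
    (hHE : ⁅H, E⁆ = (2 : F) • E) (hHF : ⁅H, Fo⁆ = -((2 : F) • Fo)) (hEF : ⁅E, Fo⁆ = H)
    (v : M) (k n : ℕ)
    (hE : (E ^ k) v = 0) (hF : (Fo ^ n) v = 0) :
    ∃ W : Submodule F M, v ∈ W ∧ (∀ x ∈ W, E x ∈ W) ∧ (∀ x ∈ W, Fo x ∈ W) ∧
      (∀ x ∈ W, H x ∈ W) ∧ Module.Finite F ↥W ∧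
      (∀ W' : Submodule F M, v ∈ W' → (∀ x ∈ W', E x ∈ W') → (∀ x ∈ W', Fo x ∈ W') →
        (∀ x ∈ W', H x ∈ W') → W ≤ W') := by
  obtain ⟨W₀, hvW₀, hW₀, _⟩ :=
    IsSl2Action.exists_finite_isSl2Invariant ⟨hHE, hHF, hEF⟩ hE hF
  set S := {W : Submodule F M | v ∈ W ∧ IsSl2Invariant E Fo H W}
  have hS : IsSl2Invariant E Fo H (sInf S) := .sInf fun W hW => hW.2
  exact ⟨sInf S, mem_sInf.2 fun W hW => hW.1, fun x hx => hS.le_comap_e hx,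
    fun x hx => hS.le_comap_f hx, fun x hx => hS.le_comap_h hx,
    Submodule.finiteDimensional_of_le (sInf_le ⟨hvW₀, hW₀⟩),
    fun W' hv he hf hh => sInf_le ⟨hv, he, hf, hh⟩⟩

theorem stmt_4 (F M : Type*) [Field F] [CharZero F] [AddCommGroup M] [Module F M]
    (E Fo H : Module.End F M)
    (hHE : ⁅H, E⁆ = (2 : F) • E) (hHF : ⁅H, Fo⁆ = -((2 : F) • Fo)) (hEF : ⁅E, Fo⁆ = H)
    (v : M) (k n : ℕ) (hk : 0 < k) (hn : 0 < n)
    (hE : (E ^ k) v = 0) (hF : (Fo ^ n) v = 0) :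
    ∃ W : Submodule F M, v ∈ W ∧ (∀ x ∈ W, E x ∈ W) ∧ (∀ x ∈ W, Fo x ∈ W) ∧
      (∀ x ∈ W, H x ∈ W) ∧ Module.Finite F ↥W ∧
      (∀ W' : Submodule F M, v ∈ W' → (∀ x ∈ W', E x ∈ W') → (∀ x ∈ W', Fo x ∈ W') →
        (∀ x ∈ W', H x ∈ W') → W ≤ W') :=
  stmt_4_general F M E Fo H hHE hHF hEF v k n hE hF
end

section
/- Let M be a representation of sl₂ over a field of characteristic zero, let v ∈ M with eᵏ·v = 0 and fⁿ·v = 0, and set w := e^{k-1}·v. Then f^{n+k-1}·w = 0. -/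
/-!
Commuting `e` past a power of `f` only produces terms ending in a slightly smaller power of `f`:
`f ^ (m + 1) * e ∈ A * f ^ m`. Iterating, `f ^ (n + a) * e ^ a` lies in the left ideal `A * f ^ n`,
so it kills every vector killed by `f ^ n`.
-/

section Sl2Relations

variable {R A : Type*} [CommRing R] [Ring A] [Algebra R A] {e f h : A}

theorem pow_succ_mul_of_lie_eq (hef : ⁅e, f⁆ = h) (hhf : ⁅h, f⁆ = -((2 : R) • f)) (m : ℕ) :
    f ^ (m + 1) * e = (e * f - (m + 1) • h - (m * (m + 1)) • 1) * f ^ m := by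
  rw [Ring.lie_def] at hef hhf
  have hfe : f * e = e * f - h := by rw [← hef, sub_sub_cancel]
  have hfh : f * h = h * f + 2 • f := by
    rw [← sub_eq_iff_eq_add', ← neg_sub, hhf, neg_neg, two_smul, two_nsmul]
  induction m with
  | zero => simp [hfe]
  | succ m ih =>
    calc f ^ (m + 1 + 1) * e = f * (e * f - (m + 1) • h - (m * (m + 1)) • 1) * f ^ m := by
          rw [pow_succ', mul_assoc, ih, mul_assoc]
      _ = _ := by
        simp only [mul_sub, mul_smul_comm, mul_one, ← mul_assoc, hfe, hfh, pow_succ']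
        simp only [sub_mul, add_mul, smul_mul_assoc, one_mul, mul_assoc]
        module

theorem exists_pow_add_mul_pow_eq_mul_pow (hef : ⁅e, f⁆ = h) (hhf : ⁅h, f⁆ = -((2 : R) • f))
    (n a : ℕ) : ∃ x : A, f ^ (n + a) * e ^ a = x * f ^ n := by
  induction a generalizing n with
  | zero => exact ⟨1, by simp⟩
  | succ a ih =>
    obtain ⟨x, hx⟩ := ih (n + 1)
    refine ⟨x * (e * f - (n + 1) • h - (n * (n + 1)) • 1), ?_⟩
    calc f ^ (n + (a + 1)) * e ^ (a + 1) = f ^ (n + 1 + a) * e ^ a * e := by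
          rw [add_right_comm, ← add_assoc, pow_succ e, mul_assoc]
      _ = x * (f ^ (n + 1) * e) := by rw [hx, mul_assoc]
      _ = _ := by rw [pow_succ_mul_of_lie_eq hef hhf, mul_assoc]

end Sl2Relations

theorem stmt_5_general (F M : Type*) [Field F] [AddCommGroup M] [Module F M]
    (E Fo H : Module.End F M)
    (hHF : ⁅H, Fo⁆ = -((2 : F) • Fo)) (hEF : ⁅E, Fo⁆ = H)
    (v : M) (k n : ℕ) (hk : 1 ≤ k)
    (hF : (Fo ^ n) v = 0) :
    (Fo ^ (n + k - 1)) ((E ^ (k - 1)) v) = 0 := by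
  obtain ⟨x, hx⟩ := exists_pow_add_mul_pow_eq_mul_pow hEF hHF n (k - 1)
  rw [Nat.add_sub_assoc hk, ← Module.End.mul_apply, hx, Module.End.mul_apply, hF, map_zero]

theorem stmt_5 (F M : Type*) [Field F] [CharZero F] [AddCommGroup M] [Module F M]
    (E Fo H : Module.End F M)
    (hHE : ⁅H, E⁆ = (2 : F) • E) (hHF : ⁅H, Fo⁆ = -((2 : F) • Fo)) (hEF : ⁅E, Fo⁆ = H)
    (v : M) (k n : ℕ) (hk : 1 ≤ k) (hn : 1 ≤ n)
    (hE : (E ^ k) v = 0) (hF : (Fo ^ n) v = 0) :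
    (Fo ^ (n + k - 1)) ((E ^ (k - 1)) v) = 0 :=
  stmt_5_general F M E Fo H hHF hEF v k n hk hF
end

section
/- Let (V, ω) be a finite-dimensional symplectic vector space and L ⊂ V a Lagrangian subspace, with projection p : V → V/L. For a linear subspace Z ⊆ V the following are equivalent: (i) Z^⊥ ∩ L ⊆ Z ∩ L; (ii) p(Z^⊥) ⊆ p(Z); (iii) p(Z)^⊥ ⊆ Z ∩ L, where p(Z)^⊥ denotes the annihilator of p(Z) inside L under the identification L ≅ (V/L)* induced by ω. -/
/-!
As `L = L^⊥`, condition (i) says `(Z + L)^⊥ = Z^⊥ ∩ L ⊆ Z`; for a nondegenerate reflexive form on a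
finite-dimensional space taking orthogonals reverses this to `Z^⊥ ⊆ Z + L`, which is (ii) because
`ker p = L`. Under `L ≅ (V/L)*` the annihilator of `p(Z)` is `Z^⊥ ∩ L`, so (iii) is (i) read pointwise.
-/

namespace LinearMap.BilinForm

section CommRing

variable {R M : Type*} [CommRing R] [AddCommGroup M] [Module R M] {B : LinearMap.BilinForm R M}

theorem orthogonal_sup (N N' : Submodule R M) :
    B.orthogonal (N ⊔ N') = B.orthogonal N ⊓ B.orthogonal N' := by
  refine le_antisymm (le_inf (orthogonal_le le_sup_left) (orthogonal_le le_sup_right)) ?_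
  rintro x ⟨hxN, hxN'⟩ _ hn
  obtain ⟨a, ha, b, hb, rfl⟩ := Submodule.mem_sup.mp hn
  simp only [map_add, LinearMap.add_apply, hxN a ha, hxN' b hb, add_zero]

theorem IsRefl.mem_orthogonal_iff (hB : B.IsRefl) {N : Submodule R M} {x : M} :
    x ∈ B.orthogonal N ↔ ∀ n ∈ N, B x n = 0 :=
  forall₂_congr fun _ _ ↦ hB.eq_iff

end CommRing

section Field

variable {K V : Type*} [Field K] [AddCommGroup V] [Module K V] [FiniteDimensional K V]
  {B : LinearMap.BilinForm K V}

theorem orthogonal_le_comm (hB : B.Nondegenerate) (hB₀ : B.IsRefl) {W W' : Submodule K V} :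
    B.orthogonal W ≤ W' ↔ B.orthogonal W' ≤ W :=
  have key {W W' : Submodule K V} (h : B.orthogonal W ≤ W') : B.orthogonal W' ≤ W :=
    orthogonal_orthogonal hB hB₀ W ▸ orthogonal_le h
  ⟨key, key⟩

theorem orthogonal_inf_orthogonal_le_iff (hB : B.Nondegenerate) (hB₀ : B.IsRefl)
    (Z L : Submodule K V) :
    B.orthogonal Z ⊓ B.orthogonal L ≤ Z ↔ B.orthogonal Z ≤ L ⊔ Z := by
  rw [orthogonal_le_comm hB hB₀, sup_comm, orthogonal_sup]

end Field

end LinearMap.BilinForm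

theorem Submodule.map_mkQ_le_map_mkQ_iff {R M : Type*} [Ring R] [AddCommGroup M] [Module R M]
    (p N N' : Submodule R M) : N.map p.mkQ ≤ N'.map p.mkQ ↔ N ≤ p ⊔ N' := by
  rw [map_le_iff_le_comap, comap_map_mkQ]

open LinearMap.BilinForm in
theorem stmt_7 (F V : Type*) [Field F] [AddCommGroup V] [Module F V] [FiniteDimensional F V]
    (ω : LinearMap.BilinForm F V) (halt : ω.IsAlt) (hnd : ω.Nondegenerate)
    (L : Submodule F V) (hL : ω.orthogonal L = L) (Z : Submodule F V) :
    ((ω.orthogonal Z ⊓ L ≤ Z ⊓ L) ↔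
      ((ω.orthogonal Z).map L.mkQ ≤ Z.map L.mkQ)) ∧
    (((ω.orthogonal Z).map L.mkQ ≤ Z.map L.mkQ) ↔
      (∀ l ∈ L, (∀ z ∈ Z, ω l z = 0) → l ∈ Z ⊓ L)) := by
  have hrefl : ω.IsRefl := halt.isRefl
  have hi_ii : ω.orthogonal Z ⊓ L ≤ Z ⊓ L ↔ (ω.orthogonal Z).map L.mkQ ≤ Z.map L.mkQ := by
    rw [Submodule.map_mkQ_le_map_mkQ_iff, ← orthogonal_inf_orthogonal_le_iff hnd hrefl, hL,
      le_inf_iff, and_iff_left inf_le_right]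
  have hi_iii : ω.orthogonal Z ⊓ L ≤ Z ⊓ L ↔ ∀ l ∈ L, (∀ z ∈ Z, ω l z = 0) → l ∈ Z ⊓ L := by
    simp only [SetLike.le_def, Submodule.mem_inf, hrefl.mem_orthogonal_iff]
    exact ⟨fun h l hl hlZ ↦ h ⟨hlZ, hl⟩, fun h l hl ↦ h l hl.2 hl.1⟩
  exact ⟨hi_ii, hi_ii.symm.trans hi_iii⟩
end

section
/- Let F be a field and n ≥ 2. Let P_n ⊂ GL_n(F) be the subgroup of matrices whose last row is (0, …, 0, 1), and let P_nᵗ be the subgroup of its transposes. Then P_n and P_nᵗ together generate GL_n(F). -/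
/-!
`GL_n(F)` is generated by transvections and invertible diagonal matrices. With `l` the
distinguished index, a transvection `t_{ij}(c)` lies in `P_n` when `i ≠ l` and in `P_nᵗ`
otherwise. An invertible diagonal matrix is a product of one with `l`-th entry `1`, which lies in
`P_n`, and `diag(1, …, d, …, 1)` with `d` in position `l`; the latter is conjugate, by a product of
three transvections, to the same matrix with `d` moved to a position `k ≠ l`, which lies in `P_n`.
-/

namespace Matrix

variable {ι R : Type*}

def IsMirabolic [Zero R] [One R] (l : ι) (M : Matrix ι ι R) : Prop :=
  (∀ j, j ≠ l → M l j = 0) ∧ M l l = 1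

section CommRing

variable [DecidableEq ι] [CommRing R]

theorem transpose_transvection (i j : ι) (c : R) :
    (transvection i j c)ᵀ = transvection j i c := by
  simp [transvection, transpose_single]

theorem isMirabolic_transvection {i l : ι} (hil : i ≠ l) (j : ι) (c : R) :
    IsMirabolic l (transvection i j c) :=
  ⟨fun k hkl => by simp [transvection, hil, hkl.symm],
    by simp [transvection, hil]⟩

theorem isMirabolic_diagonal {l : ι} {D : ι → R} (hD : D l = 1) : IsMirabolic l (diagonal D) :=
  ⟨fun _ hj => diagonal_apply_ne' D hj, by simp [hD]⟩

variable [Fintype ι]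

/-- `t_{kl}(1) t_{lk}(-1) t_{kl}(1)` maps `e_k ↦ -e_l` and `e_l ↦ e_k`, and the last three factors
are its inverse. -/
theorem diagonal_mulSingle_eq_conj {k l : ι} (hkl : k ≠ l) (d : R) :
    diagonal (Pi.mulSingle l d) =
      transvection k l 1 * transvection l k (-1) * transvection k l 1 *
        diagonal (Pi.mulSingle k d) *
        (transvection k l (-1) * transvection l k 1 * transvection k l (-1)) := by
  ext a b
  simp [transvection, add_mul, mul_add, Pi.mulSingle_apply, single_apply, hkl.symm]
  by_cases hak : a = k <;> by_cases hal : a = l <;> by_cases hbk : b = k <;>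
    by_cases hbl : b = l <;> simp_all [eq_comm, diagonal_apply]

def mirabolicGenerators (l : ι) : Set (GL ι R) :=
  {g | IsMirabolic l (g : Matrix ι ι R) ∨ IsMirabolic l (g : Matrix ι ι R)ᵀ}

/-- The generated subgroup seen inside the matrix monoid, where the induction principle
`diagonal_transvection_induction_of_det_ne_zero` applies. -/
abbrev mirabolicClosureMatrices (l : ι) : Submonoid (Matrix ι ι R) :=
  (Subgroup.closure (mirabolicGenerators l)).toSubmonoid.map (Units.coeHom _)

variable {l : ι}

theorem mem_mirabolicClosureMatrices {M : Matrix ι ι R} (hM : IsUnit M)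
    (h : IsMirabolic l M ∨ IsMirabolic l Mᵀ) : M ∈ mirabolicClosureMatrices l :=
  ⟨hM.unit, Subgroup.subset_closure h, rfl⟩

theorem transvection_mem_mirabolicClosureMatrices {i j : ι} (hij : i ≠ j) (c : R) :
    transvection i j c ∈ mirabolicClosureMatrices l := by
  refine mem_mirabolicClosureMatrices ((isUnit_iff_isUnit_det _).2 ?_) ?_
  · rw [det_transvection_of_ne _ _ hij]
    exact isUnit_one
  by_cases hil : i = l
  · subst hil
    exact Or.inr (transpose_transvection i j c ▸ isMirabolic_transvection hij.symm i c)
  · exact Or.inl (isMirabolic_transvection hil j c)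

theorem diagonal_mem_mirabolicClosureMatrices {k : ι} (hkl : k ≠ l) {D : ι → R}
    (hD : IsUnit D) : diagonal D ∈ mirabolicClosureMatrices l := by
  have hfactor : diagonal D =
      diagonal (Function.update D l 1) * diagonal (Pi.mulSingle l (D l)) := by
    rw [diagonal_mul_diagonal]
    congr 1
    ext i
    by_cases hi : i = l <;> simp [hi]
  have hunit {E : ι → R} (hE : ∀ i, IsUnit (E i)) : IsUnit (diagonal E) :=
    isUnit_diagonal.2 (Pi.isUnit_iff.2 hE)
  have hDi : ∀ i, IsUnit (D i) := Pi.isUnit_iff.1 hD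
  have hk : diagonal (Pi.mulSingle k (D l)) ∈ mirabolicClosureMatrices l :=
    mem_mirabolicClosureMatrices
      (hunit fun i => by by_cases hi : i = k <;> simp [hi, hDi])
      (Or.inl (isMirabolic_diagonal (Pi.mulSingle_eq_of_ne hkl.symm _)))
  have hl : diagonal (Pi.mulSingle l (D l)) ∈ mirabolicClosureMatrices l := by
    rw [diagonal_mulSingle_eq_conj hkl]
    refine mul_mem (mul_mem ?_ hk) ?_ <;>
      exact mul_mem (mul_mem (transvection_mem_mirabolicClosureMatrices hkl _)
        (transvection_mem_mirabolicClosureMatrices hkl.symm _))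
        (transvection_mem_mirabolicClosureMatrices hkl _)
  have hupdate : diagonal (Function.update D l 1) ∈ mirabolicClosureMatrices l :=
    mem_mirabolicClosureMatrices (hunit fun i => by by_cases hi : i = l <;> simp [hi, hDi])
      (Or.inl (isMirabolic_diagonal (Function.update_self _ _ _)))
  rw [hfactor]
  exact mul_mem hupdate hl

end CommRing

theorem closure_mirabolicGenerators_eq_top {F : Type*} [Fintype ι] [DecidableEq ι] [Field F]
    [Nontrivial ι] (l : ι) : Subgroup.closure (mirabolicGenerators l : Set (GL ι F)) = ⊤ := by
  obtain ⟨k, hkl⟩ := exists_ne l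
  refine eq_top_iff.2 fun g _ =>
    (Submonoid.mem_map_iff_mem (f := Units.coeHom _) Units.val_injective).1 ?_
  exact diagonal_transvection_induction_of_det_ne_zero
    (· ∈ mirabolicClosureMatrices (R := F) l) g
    (isUnit_iff_ne_zero.1 ((isUnit_iff_isUnit_det _).1 g.isUnit))
    (fun D hD => diagonal_mem_mirabolicClosureMatrices hkl
      (isUnit_diagonal.1 ((isUnit_iff_isUnit_det _).2 (isUnit_iff_ne_zero.2 hD))))
    (fun t => transvection_mem_mirabolicClosureMatrices t.hij t.c)
    (fun _ _ _ _ => mul_mem)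

end Matrix

open Matrix

theorem stmt_10 (F : Type*) [Field F] (n : ℕ) :
    Subgroup.closure {g : Matrix.GeneralLinearGroup (Fin (n + 2)) F |
      ((∀ j : Fin (n + 2), j ≠ Fin.last (n + 1) →
          (g : Matrix (Fin (n + 2)) (Fin (n + 2)) F) (Fin.last (n + 1)) j = 0) ∧
        (g : Matrix (Fin (n + 2)) (Fin (n + 2)) F) (Fin.last (n + 1)) (Fin.last (n + 1)) = 1) ∨
      ((∀ j : Fin (n + 2), j ≠ Fin.last (n + 1) →
          ((g : Matrix (Fin (n + 2)) (Fin (n + 2)) F))ᵀ (Fin.last (n + 1)) j = 0) ∧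
        ((g : Matrix (Fin (n + 2)) (Fin (n + 2)) F))ᵀ (Fin.last (n + 1)) (Fin.last (n + 1)) = 1)}
      = ⊤ :=
  closure_mirabolicGenerators_eq_top (Fin.last (n + 1))
end

section
/- Let F be a field of characteristic zero and let A be the n×n regular nilpotent Jordan block. Let M be an n×n matrix with M_{k,l} = 0 unless k ≤ i and l > i for some fixed 0 < i < n. Then any matrix B satisfying [A, B] = M is upper triangular. -/
open Matrix

/-- The `n × n` regular nilpotent Jordan block: `1`s on the first superdiagonal. -/
def jordanBlock (F : Type*) [Field F] (n : ℕ) : Matrix (Fin n) (Fin n) F :=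
  Matrix.of fun k l => if (l : ℕ) = (k : ℕ) + 1 then 1 else 0

/-!
For `l ≤ k < n - 1`, entry `(k, l)` of `[A, B]` is `B (k+1) l - B k (l-1)` (the last term read
as `0` when `l = 0`), and it vanishes because `M` is zero on and below the diagonal. So the entries
of `B` below the diagonal are constant along diagonals and vanish in column `0`.
-/

section JordanBlock

variable {F : Type*} [Field F] {n : ℕ}

theorem jordanBlock_mul_apply (B : Matrix (Fin n) (Fin n) F) {k k' : Fin n}
    (hk : (k' : ℕ) = k + 1) (l : Fin n) : (jordanBlock F n * B) k l = B k' l := by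
  rw [mul_apply, Finset.sum_eq_single k']
  · simp [jordanBlock, hk]
  · intro j _ hj
    have : (j : ℕ) ≠ k + 1 := fun h => hj (Fin.ext (h.trans hk.symm))
    simp [jordanBlock, this]
  · simp

theorem mul_jordanBlock_apply (B : Matrix (Fin n) (Fin n) F) (k : Fin n) {l l' : Fin n}
    (hl : (l' : ℕ) = l + 1) : (B * jordanBlock F n) k l' = B k l := by
  rw [mul_apply, Finset.sum_eq_single l]
  · simp [jordanBlock, hl]
  · intro j _ hj
    have : (l' : ℕ) ≠ j + 1 := fun h => hj (Fin.ext (by omega))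
    simp [jordanBlock, this]
  · simp

theorem mul_jordanBlock_apply_of_val_eq_zero (B : Matrix (Fin n) (Fin n) F) (k : Fin n)
    {l : Fin n} (hl : (l : ℕ) = 0) : (B * jordanBlock F n) k l = 0 := by
  rw [mul_apply]
  refine Finset.sum_eq_zero fun j _ => ?_
  have : (l : ℕ) ≠ j + 1 := by omega
  simp [jordanBlock, this]

theorem blockTriangular_id_of_commutator_jordanBlock (B : Matrix (Fin n) (Fin n) F)
    (hAB : ∀ k l : Fin n, l ≤ k → (jordanBlock F n * B - B * jordanBlock F n) k l = 0) :
    B.BlockTriangular id := by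
  suffices H : ∀ m : ℕ, ∀ k l : Fin n, (l : ℕ) = m → l < k → B k l = 0 from
    fun k l hlk => H l k l rfl hlk
  intro m
  induction m with
  | zero =>
    intro k l hl hlk
    let k' : Fin n := ⟨k - 1, by omega⟩
    have h := hAB k' l (Fin.le_def.2 (by simp [k']; omega))
    rwa [Matrix.sub_apply, jordanBlock_mul_apply B (k' := k) (by simp [k']; omega),
      mul_jordanBlock_apply_of_val_eq_zero B k' hl, sub_zero] at h
  | succ m ih =>
    intro k l hl hlk
    let k' : Fin n := ⟨k - 1, by omega⟩
    let l' : Fin n := ⟨m, by omega⟩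
    have h := hAB k' l (Fin.le_def.2 (by simp [k']; omega))
    rwa [Matrix.sub_apply, jordanBlock_mul_apply B (k' := k) (by simp [k']; omega),
      mul_jordanBlock_apply B k' (l := l') hl,
      ih k' l' rfl (Fin.lt_def.2 (by simp [k', l']; omega)), sub_zero] at h

end JordanBlock

theorem stmt_12_general (F : Type*) [Field F] (n i : ℕ)
    (M B : Matrix (Fin n) (Fin n) F)
    (hM : ∀ k l : Fin n, ¬((k : ℕ) < i ∧ i ≤ (l : ℕ)) → M k l = 0)
    (hB : jordanBlock F n * B - B * jordanBlock F n = M) :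
    ∀ k l : Fin n, (l : ℕ) < (k : ℕ) → B k l = 0 := by
  have hAB : ∀ k l : Fin n, l ≤ k → (jordanBlock F n * B - B * jordanBlock F n) k l = 0 :=
    fun k l hlk => hB ▸ hM k l fun ⟨hk, hl⟩ => absurd (Fin.le_def.1 hlk) (by omega)
  exact fun k l hlk => blockTriangular_id_of_commutator_jordanBlock B hAB hlk

theorem stmt_12 (F : Type*) [Field F] [CharZero F] (n i : ℕ) (hi : 0 < i) (hin : i < n)
    (M B : Matrix (Fin n) (Fin n) F)
    (hM : ∀ k l : Fin n, ¬((k : ℕ) < i ∧ i ≤ (l : ℕ)) → M k l = 0)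
    (hB : jordanBlock F n * B - B * jordanBlock F n = M) :
    ∀ k l : Fin n, (l : ℕ) < (k : ℕ) → B k l = 0 :=
  stmt_12_general F n i M B hM hB
end

section
/- Let F be a field, A the n×n regular nilpotent Jordan block, and 0 < i < n. Define R ⊆ Fⁿ × Fⁿ × Fⁿ × Fⁿ as the set of tuples (v₁, φ₁, v₂, φ₂) with v₁, v₂ ∈ Ker(Aⁱ), φ₁, φ₂ ∈ Ker((Aᵗ)^{n-i}), such that there exists a nilpotent matrix B with [A, B] = v₁ φ₂ᵗ − v₂ φ₁ᵗ. Then every element of R satisfies (v₁)_i (φ₂)_{i+1} − (v₂)_i (φ₁)_{i+1} = 0. -/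
/-!
Write `A` for the Jordan block and index coordinates by `0, …, m` (so `n = m + 1`). Summing the
superdiagonal entries `(k, k + 1)` of `[A, B] = AB - BA` telescopes to `B m m - B 0 0`
(this sum is `tr (Aᵀ [A, B])`). Since `φ₁ 0 = φ₂ 0 = 0`, the commutator kills `e₀`, so
`A (B e₀) = 0`, i.e. `B e₀` is a multiple of `e₀`; nilpotency of `B` forces `B 0 0 = 0`. Dually
`v₁ m = v₂ m = 0` gives `B m m = 0`. On the other side the superdiagonal sum of
`v₁ φ₂ᵗ - v₂ φ₁ᵗ` is `∑ k, (v₁ k φ₂ (k+1) - v₂ k φ₁ (k+1))`, and since the `vⱼ` are supported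
below `i` and the `φⱼ` from `i` on, only the term `k = i - 1` survives.
-/

open Matrix

theorem Fin.sum_succ_sub_castSucc {G : Type*} [AddCommGroup G] {m : ℕ} (f : Fin (m + 1) → G) :
    ∑ t : Fin m, (f t.succ - f t.castSucc) = f (Fin.last m) - f 0 := by
  induction m with
  | zero => simp
  | succ m ih =>
    rw [Fin.sum_univ_castSucc]
    simp only [Fin.succ_castSucc]
    rw [ih (fun k => f k.castSucc), Fin.succ_last, Fin.castSucc_zero]
    abel

theorem sum_castSucc_mul_succ_of_support {R : Type*} [NonUnitalNonAssocSemiring R] {m i : ℕ}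
    (hi : 0 < i) (him : i ≤ m) {v φ : Fin (m + 1) → R}
    (hv : ∀ k : Fin (m + 1), i ≤ k → v k = 0) (hφ : ∀ k : Fin (m + 1), (k : ℕ) < i → φ k = 0) :
    ∑ t : Fin m, v t.castSucc * φ t.succ = v ⟨i - 1, by omega⟩ * φ ⟨i, by omega⟩ := by
  rw [Finset.sum_eq_single ⟨i - 1, by omega⟩]
  · congr 2; ext; exact Nat.sub_add_cancel hi
  · intro t _ ht
    have ht' : (t : ℕ) ≠ i - 1 := fun h => ht (Fin.ext h)
    rcases lt_or_gt_of_ne ht' with h | h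
    · rw [hφ _ (by rw [Fin.val_succ]; omega), mul_zero]
    · rw [hv _ (by rw [Fin.val_castSucc]; omega), zero_mul]
  · simp

namespace Matrix

variable {ι R : Type*} [Fintype ι] [DecidableEq ι] [CommRing R] [IsReduced R]

theorem apply_self_eq_zero_of_isNilpotent_of_col {B : Matrix ι ι R} (hB : IsNilpotent B) {j : ι}
    (hj : ∀ k ≠ j, B k j = 0) : B j j = 0 := by
  have hpow (N : ℕ) : (B ^ N) j j = B j j ^ N := by
    induction N with
    | zero => simp
    | succ N ih =>
      rw [pow_succ, mul_apply, Finset.sum_eq_single j (fun k _ hk => by rw [hj k hk, mul_zero])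
        (by simp), ih, pow_succ]
  obtain ⟨N, hN⟩ := hB
  exact IsNilpotent.eq_zero ⟨N, by rw [← hpow, hN, zero_apply]⟩

theorem apply_self_eq_zero_of_isNilpotent_of_row {B : Matrix ι ι R} (hB : IsNilpotent B) {j : ι}
    (hj : ∀ k ≠ j, B j k = 0) : B j j = 0 :=
  apply_self_eq_zero_of_isNilpotent_of_col (B := Bᵀ) (isNilpotent_transpose_iff.mpr hB) hj

end Matrix

section JordanBlock

variable {F : Type*} [Field F] {m : ℕ}

@[simp] theorem jordanBlock_mulVec_castSucc (v : Fin (m + 1) → F) (t : Fin m) :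
    (jordanBlock F (m + 1) *ᵥ v) t.castSucc = v t.succ := by
  have (l : Fin (m + 1)) : (l : ℕ) = t + 1 ↔ l = t.succ := by simp [Fin.ext_iff]
  simp [mulVec, dotProduct, jordanBlock, this]

@[simp] theorem jordanBlock_mulVec_last (v : Fin (m + 1) → F) :
    (jordanBlock F (m + 1) *ᵥ v) (Fin.last m) = 0 := by
  have (l : Fin (m + 1)) : (l : ℕ) ≠ m + 1 := l.isLt.ne
  simp [mulVec, dotProduct, jordanBlock, this]

@[simp] theorem vecMul_jordanBlock_succ (v : Fin (m + 1) → F) (t : Fin m) :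
    (v ᵥ* jordanBlock F (m + 1)) t.succ = v t.castSucc := by
  have (l : Fin (m + 1)) : (t : ℕ) = l ↔ l = t.castSucc := by simp [Fin.ext_iff, eq_comm]
  simp [vecMul, dotProduct, jordanBlock, this]

@[simp] theorem vecMul_jordanBlock_zero (v : Fin (m + 1) → F) :
    (v ᵥ* jordanBlock F (m + 1)) 0 = 0 := by
  simp [vecMul, dotProduct, jordanBlock]

theorem apply_eq_zero_of_jordanBlock_pow_mulVec_eq_zero {p : ℕ} {v : Fin (m + 1) → F}
    (hv : jordanBlock F (m + 1) ^ p *ᵥ v = 0) {k : Fin (m + 1)} (hk : p ≤ k) : v k = 0 := by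
  induction p generalizing v k with
  | zero => simpa using congrFun hv k
  | succ p ih =>
    rw [pow_succ, ← mulVec_mulVec] at hv
    have hk0 : k ≠ 0 := by rintro rfl; simp at hk
    obtain ⟨t, rfl⟩ := Fin.exists_succ_eq.mpr hk0
    rw [← jordanBlock_mulVec_castSucc v t]
    exact ih hv (by rw [Fin.val_castSucc]; rw [Fin.val_succ] at hk; omega)

theorem apply_eq_zero_of_jordanBlock_transpose_pow_mulVec_eq_zero {p : ℕ} {φ : Fin (m + 1) → F}
    (hφ : (jordanBlock F (m + 1))ᵀ ^ p *ᵥ φ = 0) {k : Fin (m + 1)} (hk : k + p ≤ m) :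
    φ k = 0 := by
  induction p generalizing φ k with
  | zero => simpa using congrFun hφ k
  | succ p ih =>
    rw [pow_succ, ← mulVec_mulVec] at hφ
    have hk_last : k ≠ Fin.last m := by rintro rfl; simp at hk
    obtain ⟨t, rfl⟩ := Fin.exists_castSucc_eq.mpr hk_last
    rw [← vecMul_jordanBlock_succ φ t, ← mulVec_transpose]
    exact ih hφ (by rw [Fin.val_succ]; rw [Fin.val_castSucc] at hk; omega)

theorem sum_jordanBlock_commutator_castSucc_succ (B : Matrix (Fin (m + 1)) (Fin (m + 1)) F) :
    ∑ t : Fin m, (jordanBlock F (m + 1) * B - B * jordanBlock F (m + 1)) t.castSucc t.succ =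
      B (Fin.last m) (Fin.last m) - B 0 0 := by
  have hentry (t : Fin m) :
      (jordanBlock F (m + 1) * B - B * jordanBlock F (m + 1)) t.castSucc t.succ =
        B t.succ t.succ - B t.castSucc t.castSucc :=
    congrArg₂ (· - ·) (jordanBlock_mulVec_castSucc (fun k => B k t.succ) t)
      (vecMul_jordanBlock_succ (B t.castSucc) t)
  simp only [hentry]
  exact Fin.sum_succ_sub_castSucc fun k => B k k

theorem apply_zero_zero_eq_zero_of_isNilpotent_of_commutator_col
    {B : Matrix (Fin (m + 1)) (Fin (m + 1)) F} (hB : IsNilpotent B)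
    (h : ∀ k, (jordanBlock F (m + 1) * B - B * jordanBlock F (m + 1)) k 0 = 0) : B 0 0 = 0 := by
  have hcol : jordanBlock F (m + 1) ^ 1 *ᵥ (fun l => B l 0) = 0 := by
    funext k
    have hk := h k
    rw [Matrix.sub_apply, show (B * jordanBlock F (m + 1)) k 0 = 0 from
      vecMul_jordanBlock_zero (B k), sub_zero] at hk
    rw [pow_one]
    exact hk
  exact apply_self_eq_zero_of_isNilpotent_of_col hB fun k hk =>
    apply_eq_zero_of_jordanBlock_pow_mulVec_eq_zero hcol (Fin.pos_iff_ne_zero.mpr hk)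

theorem apply_last_last_eq_zero_of_isNilpotent_of_commutator_row
    {B : Matrix (Fin (m + 1)) (Fin (m + 1)) F} (hB : IsNilpotent B)
    (h : ∀ l, (jordanBlock F (m + 1) * B - B * jordanBlock F (m + 1)) (Fin.last m) l = 0) :
    B (Fin.last m) (Fin.last m) = 0 := by
  have hrow : (jordanBlock F (m + 1))ᵀ ^ 1 *ᵥ B (Fin.last m) = 0 := by
    funext l
    have hl := h l
    rw [Matrix.sub_apply, show (jordanBlock F (m + 1) * B) (Fin.last m) l = 0 from
      jordanBlock_mulVec_last fun k => B k l, zero_sub, neg_eq_zero] at hl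
    rw [pow_one, mulVec_transpose]
    exact hl
  exact apply_self_eq_zero_of_isNilpotent_of_row hB fun k hk =>
    apply_eq_zero_of_jordanBlock_transpose_pow_mulVec_eq_zero hrow (Fin.lt_last_iff_ne_last.mpr hk)

end JordanBlock

theorem stmt_14 (F : Type*) [Field F] (n i : ℕ) (hi : 0 < i) (hin : i < n)
    (v₁ v₂ φ₁ φ₂ : Fin n → F)
    (hv₁ : (jordanBlock F n ^ i) *ᵥ v₁ = 0) (hv₂ : (jordanBlock F n ^ i) *ᵥ v₂ = 0)
    (hφ₁ : ((jordanBlock F n)ᵀ ^ (n - i)) *ᵥ φ₁ = 0)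
    (hφ₂ : ((jordanBlock F n)ᵀ ^ (n - i)) *ᵥ φ₂ = 0)
    (hB : ∃ B : Matrix (Fin n) (Fin n) F, IsNilpotent B ∧
      jordanBlock F n * B - B * jordanBlock F n =
        Matrix.vecMulVec v₁ φ₂ - Matrix.vecMulVec v₂ φ₁) :
    v₁ ⟨i - 1, by omega⟩ * φ₂ ⟨i, by omega⟩ - v₂ ⟨i - 1, by omega⟩ * φ₁ ⟨i, by omega⟩ = 0 := by
  obtain ⟨m, rfl⟩ : ∃ m, n = m + 1 := ⟨n - 1, by omega⟩
  obtain ⟨B, hB_nil, hAB⟩ := hB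
  have hv₁_supp (k : Fin (m + 1)) (hk : i ≤ k) :=
    apply_eq_zero_of_jordanBlock_pow_mulVec_eq_zero hv₁ hk
  have hv₂_supp (k : Fin (m + 1)) (hk : i ≤ k) :=
    apply_eq_zero_of_jordanBlock_pow_mulVec_eq_zero hv₂ hk
  have hφ₁_supp (k : Fin (m + 1)) (hk : (k : ℕ) < i) :=
    apply_eq_zero_of_jordanBlock_transpose_pow_mulVec_eq_zero hφ₁ (k := k) (by omega)
  have hφ₂_supp (k : Fin (m + 1)) (hk : (k : ℕ) < i) :=
    apply_eq_zero_of_jordanBlock_transpose_pow_mulVec_eq_zero hφ₂ (k := k) (by omega)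
  have hB_zero : B 0 0 = 0 := apply_zero_zero_eq_zero_of_isNilpotent_of_commutator_col hB_nil
    fun k => by rw [hAB]; simp [vecMulVec_apply, hφ₁_supp 0 hi, hφ₂_supp 0 hi]
  have hB_last : B (Fin.last m) (Fin.last m) = 0 :=
    apply_last_last_eq_zero_of_isNilpotent_of_commutator_row hB_nil fun l => by
      rw [hAB]
      have him : i ≤ (Fin.last m : ℕ) := by rw [Fin.val_last]; omega
      simp [vecMulVec_apply, hv₁_supp _ him, hv₂_supp _ him]
  have hsum := sum_jordanBlock_commutator_castSucc_succ B
  rw [hB_zero, hB_last, sub_zero, hAB] at hsum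
  simp only [Matrix.sub_apply, vecMulVec_apply, Finset.sum_sub_distrib] at hsum
  rwa [sum_castSucc_mul_succ_of_support hi (by omega) hv₁_supp hφ₂_supp,
    sum_castSucc_mul_succ_of_support hi (by omega) hv₂_supp hφ₁_supp] at hsum
end
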